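/- Let E ∈ ℝ² with E ≠ 0, let R, X ∈ ℝ with R ≠ 0 and X ≠ 0, let Imax > 0, and let M₁ ≠ M₂ be two distinct matrices from {M_P, M_Q, M_V}. Let f₀ : ℝ² → ℝ be convex and differentiable, let ρ > 0, and define f on 3×3 real symmetric matrices by f(W) := f₀(Tr(M₁W), Tr(M₂W)) + ρ·Tr(W). Suppose the gradient of f (with respect to the Frobenius inner product ⟨A,B⟩ = Tr(AᵀB)) is Lipschitz continuous with constant L > 0, and let 0 < α ≤ 1/L. Let W_k ∈ 𝒲, let W_PGD be the unique element of 𝒲 minimizing the Frobenius distance to W_k − α∇f(W_k), and let W_{k+1} be any element of rank at most 1 minimizing Tr(W) over { W ∈ 𝒲 : Tr(M₁W) = Tr(M₁W_PGD) and Tr(M₂W) = Tr(M₂W_PGD) }. Then f(W_{k+1}) ≤ f(W_PGD) ≤ f(W_k); moreover, if f(W_{k+1}) = f(W_k), then W_k is a global minimizer of f over 𝒲. -/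

import Mathlib

/-- The matrix `J` with rows `(0,1)` and `(-1,0)`. -/
def Jmat : Matrix (Fin 2) (Fin 2) ℝ := !![0, 1; -1, 0]

/-- The impedance matrix `Z` with rows `(R,-X)` and `(X,R)`. -/
def Zmat (R X : ℝ) : Matrix (Fin 2) (Fin 2) ℝ := !![R, -X; X, R]

/-- Interpret a plain vector `Fin 2 → ℝ` as an element of Euclidean space `ℝ²`. -/
noncomputable def toE (v : Fin 2 → ℝ) : EuclideanSpace ℝ (Fin 2) := WithLp.toLp 2 v

/-- The vector `J E ∈ ℝ²`. -/
noncomputable def Jv (E : EuclideanSpace ℝ (Fin 2)) : EuclideanSpace ℝ (Fin 2) :=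
  toE (Jmat.mulVec (fun i => E i))

/-- The vector `Zᵀ E ∈ ℝ²`. -/
noncomputable def ZtE (R X : ℝ) (E : EuclideanSpace ℝ (Fin 2)) : EuclideanSpace ℝ (Fin 2) :=
  toE ((Zmat R X).transpose.mulVec (fun i => E i))

/-- `M(α, a, ζ)`: the 3×3 symmetric matrix with top-left 2×2 block `α·I₂`,
top-right column `a/2`, bottom-left row `aᵀ/2`, and bottom-right entry `ζ`. -/
noncomputable def Mmat (α : ℝ) (a : EuclideanSpace ℝ (Fin 2)) (ζ : ℝ) :
    Matrix (Fin 3) (Fin 3) ℝ :=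
  !![α, 0, a 0 / 2; 0, α, a 1 / 2; a 0 / 2, a 1 / 2, ζ]

/-- `M_P := M(3R/2, (3/2)E, 0)`. -/
noncomputable def MP (E : EuclideanSpace ℝ (Fin 2)) (R : ℝ) : Matrix (Fin 3) (Fin 3) ℝ :=
  Mmat (3 * R / 2) ((3 / 2 : ℝ) • E) 0

/-- `M_Q := M(3X/2, (3/2)JE, 0)`. -/
noncomputable def MQ (E : EuclideanSpace ℝ (Fin 2)) (X : ℝ) : Matrix (Fin 3) (Fin 3) ℝ :=
  Mmat (3 * X / 2) ((3 / 2 : ℝ) • Jv E) 0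

/-- `M_V := M(R² + X², 2ZᵀE, ‖E‖²)`. -/
noncomputable def MV (E : EuclideanSpace ℝ (Fin 2)) (R X : ℝ) : Matrix (Fin 3) (Fin 3) ℝ :=
  Mmat (R ^ 2 + X ^ 2) ((2 : ℝ) • ZtE R X E) (‖E‖ ^ 2)

/-- The space of 3×3 real matrices equipped with the Frobenius inner product,
realized as the Euclidean space on the entries (so that `⟪A, B⟫ = Tr(AᵀB)`). -/
abbrev FrobSpace : Type := EuclideanSpace ℝ (Fin 3 × Fin 3)

/-- View an element of the Frobenius space as a matrix. -/
noncomputable def toM (W : FrobSpace) : Matrix (Fin 3) (Fin 3) ℝ :=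
  Matrix.of fun i j => W (i, j)

/-- The SDP feasible set `𝒲`, as a subset of the Frobenius inner-product space:
symmetric (Hermitian) positive semidefinite matrices with
`W₁₁ + W₂₂ ≤ Imax²` and `W₃₃ = 1`. -/
def WsetE (Imax : ℝ) : Set FrobSpace :=
  {W | (toM W).PosSemidef ∧ (toM W) 0 0 + (toM W) 1 1 ≤ Imax ^ 2 ∧ (toM W) 2 2 = 1}

/-! The projected gradient step decreases `f`: the variational inequality characterising the
projection onto the convex set `𝒲`, combined with the descent lemma for the `L`-smooth `f` and
`α L ≤ 1`, gives `α f(W_PGD) + ‖W_PGD - W_k‖² / 2 ≤ α f(W_k)`. The rank-one adjustment keeps both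
outputs `Tr(Mᵢ W)` and does not increase the trace, hence (as `ρ > 0`) does not increase `f`.
If `f(W_{k+1}) = f(W_k)`, the decrease estimate forces `W_PGD = W_k`; the variational inequality
then reads `⟪∇f(W_k), W - W_k⟫ ≥ 0` on `𝒲`, and convexity makes `W_k` a global minimizer. -/

open Set InnerProductSpace
open scoped RealInnerProductSpace

section ProjectedGradient

variable {F : Type*} [NormedAddCommGroup F] [InnerProductSpace ℝ F] {K : Set F}

lemma IsMinOn.inner_sub_le_zero (hK : Convex ℝ K) {u p : F} (hp : p ∈ K)
    (hmin : IsMinOn (fun w => ‖w - u‖) K p) {w : F} (hw : w ∈ K) :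
    ⟪u - p, w - p⟫ ≤ 0 := by
  refine (norm_eq_iInf_iff_real_inner_le_zero hK hp).1 (le_antisymm ?_ ?_) w hw
  · have : Nonempty K := ⟨⟨p, hp⟩⟩
    exact le_ciInf fun w => by simpa [norm_sub_rev] using hmin w.2
  · exact ciInf_le ⟨0, by rintro _ ⟨w, rfl⟩; positivity⟩ (⟨p, hp⟩ : K)

variable [CompleteSpace F] {f : F → ℝ}

lemma hasDerivAt_comp_add_smul {x : F} (d : F) {t : ℝ}
    (hf : DifferentiableAt ℝ f (x + t • d)) :
    HasDerivAt (fun s : ℝ => f (x + s • d)) ⟪gradient f (x + t • d), d⟫ t := by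
  have hline : HasDerivAt (fun s : ℝ => x + s • d) d t := by
    simpa using ((hasDerivAt_id t).smul_const d).const_add x
  have := hf.hasGradientAt.hasFDerivAt.comp_hasDerivAt t hline
  rwa [toDual_apply_apply] at this

lemma le_add_inner_gradient_add_sq (hf : Differentiable ℝ f) {L : NNReal}
    (hL : LipschitzWith L (gradient f)) (x y : F) :
    f y ≤ f x + ⟪gradient f x, y - x⟫ + L / 2 * ‖y - x‖ ^ 2 := by
  set d := y - x
  -- the gap between the quadratic model and `f` along the segment; `g' ≤ 0` is Cauchy–Schwarz
  -- plus the Lipschitz bound on `∇f`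
  let g : ℝ → ℝ := fun t => f (x + t • d) - t * ⟪gradient f x, d⟫ - L / 2 * t ^ 2 * ‖d‖ ^ 2
  let g' : ℝ → ℝ := fun t => ⟪gradient f (x + t • d), d⟫ - ⟪gradient f x, d⟫ - L * t * ‖d‖ ^ 2
  have hg : ∀ t, HasDerivAt g (g' t) t := fun t => by
    have := (((hasDerivAt_comp_add_smul (x := x) d (hf _)).sub
      ((hasDerivAt_id t).mul_const ⟪gradient f x, d⟫)).sub
      (((hasDerivAt_pow 2 t).const_mul (L / 2 : ℝ)).mul_const (‖d‖ ^ 2)))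
    exact this.congr_deriv (by simp only [g']; push_cast; ring)
  have hg' : ∀ t ∈ interior (Icc (0 : ℝ) 1), g' t ≤ 0 := fun t ht => by
    have ht0 : 0 ≤ t := (interior_subset ht).1
    have hlip : ‖gradient f (x + t • d) - gradient f x‖ ≤ L * (t * ‖d‖) := by
      simpa [dist_eq_norm, norm_smul, abs_of_nonneg ht0] using hL.dist_le_mul (x + t • d) x
    have := real_inner_le_norm (gradient f (x + t • d) - gradient f x) d
    rw [inner_sub_left] at this
    nlinarith [norm_nonneg d]
  have hanti : AntitoneOn g (Icc 0 1) :=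
    antitoneOn_of_hasDerivWithinAt_nonpos (convex_Icc 0 1)
      (HasDerivAt.continuousOn fun t _ => hg t) (fun t _ => (hg t).hasDerivWithinAt) hg'
  have := hanti (left_mem_Icc.2 zero_le_one) (right_mem_Icc.2 zero_le_one) zero_le_one
  have hy : x + (1 : ℝ) • d = y := by simp [d]
  simp only [g, hy, zero_smul, add_zero, zero_mul, one_mul, one_pow, mul_one, sub_zero] at this
  linarith

lemma ConvexOn.add_inner_gradient_le {s : Set F} (hconv : ConvexOn ℝ s f) {x y : F}
    (hx : x ∈ s) (hy : y ∈ s) (hf : DifferentiableAt ℝ f x) :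
    f x + ⟪gradient f x, y - x⟫ ≤ f y := by
  have hline : f ∘ AffineMap.lineMap x y = fun t : ℝ => f (x + t • (y - x)) := funext fun t => by
    rw [Function.comp_apply, AffineMap.lineMap_apply_module]; congr 1; module
  have hder := hasDerivAt_comp_add_smul (x := x) (y - x) (t := (0 : ℝ)) (by simpa using hf)
  rw [← hline, zero_smul, add_zero] at hder
  have := (hconv.comp_affineMap (AffineMap.lineMap x y)).le_slope_of_hasDerivAt
    (x := 0) (y := 1) (by simpa using hx) (by simpa using hy) zero_lt_one hder
  simp only [slope_def_field, Function.comp_apply, AffineMap.lineMap_apply_one,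
    AffineMap.lineMap_apply_zero, sub_zero, div_one] at this
  linarith

variable {L : NNReal} {α : ℝ} {x p : F}

lemma sufficient_decrease_of_projected_gradient_step (hK : Convex ℝ K)
    (hf : Differentiable ℝ f) (hL : LipschitzWith L (gradient f)) (hα : 0 ≤ α)
    (hαL : α * L ≤ 1) (hx : x ∈ K) (hp : p ∈ K)
    (hproj : IsMinOn (fun w => ‖w - (x - α • gradient f x)‖) K p) :
    α * f p + ‖p - x‖ ^ 2 / 2 ≤ α * f x := by
  have hvar := hproj.inner_sub_le_zero hK hp hx
  have hexp : ⟪x - α • gradient f x - p, x - p⟫ = ‖p - x‖ ^ 2 + α * ⟪gradient f x, p - x⟫ := by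
    rw [show x - α • gradient f x - p = -(p - x) - α • gradient f x by abel,
      show x - p = -(p - x) by abel, inner_sub_left, inner_neg_neg, inner_neg_right,
      real_inner_smul_left, real_inner_self_eq_norm_sq]
    ring
  have hdesc := mul_le_mul_of_nonneg_left (le_add_inner_gradient_add_sq hf hL x p) hα
  nlinarith [mul_le_mul_of_nonneg_right hαL (sq_nonneg ‖p - x‖)]

lemma isMinOn_of_projected_gradient_step_eq_self (hK : Convex ℝ K) (hconv : ConvexOn ℝ K f)
    (hf : DifferentiableAt ℝ f x) (hα : 0 < α) (hx : x ∈ K)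
    (hproj : IsMinOn (fun w => ‖w - (x - α • gradient f x)‖) K x) : IsMinOn f K x := by
  refine isMinOn_iff.2 fun w hw => ?_
  have hvar := hproj.inner_sub_le_zero hK hx hw
  rw [sub_sub_cancel_left, inner_neg_left, real_inner_smul_left] at hvar
  have hgrad : 0 ≤ ⟪gradient f x, w - x⟫ := nonneg_of_mul_nonneg_right (by linarith) hα
  linarith [hconv.add_inner_gradient_le hx hw hf]

end ProjectedGradient

lemma toM_add (W V : FrobSpace) : toM (W + V) = toM W + toM V := by
  ext i j; simp [toM]

lemma toM_smul (c : ℝ) (W : FrobSpace) : toM (c • W) = c • toM W := by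
  ext i j; simp [toM]

lemma convex_WsetE (Imax : ℝ) : Convex ℝ (WsetE Imax) := by
  rintro W ⟨hW, hW₁, hW₂⟩ V ⟨hV, hV₁, hV₂⟩ a b ha hb hab
  simp only [WsetE, mem_ofPred_eq, toM_add, toM_smul, Matrix.add_apply, Matrix.smul_apply,
    smul_eq_mul, hW₂, hV₂]
  refine ⟨(hW.smul ha).add (hV.smul hb), ?_, by linarith⟩
  nlinarith [mul_le_mul_of_nonneg_left hW₁ ha, mul_le_mul_of_nonneg_left hV₁ hb]

noncomputable def traceForm (M : Matrix (Fin 3) (Fin 3) ℝ) : FrobSpace →L[ℝ] ℝ :=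
  LinearMap.toContinuousLinearMap
    { toFun := fun W => (M * toM W).trace
      map_add' := fun W V => by simp [toM_add, Matrix.mul_add]
      map_smul' := fun c W => by simp [toM_smul] }

@[simp]
lemma traceForm_apply (M : Matrix (Fin 3) (Fin 3) ℝ) (W : FrobSpace) :
    traceForm M W = (M * toM W).trace := rfl

section Objective

variable (M₁ M₂ : Matrix (Fin 3) (Fin 3) ℝ) {f₀ : ℝ × ℝ → ℝ} (ρ : ℝ)

lemma objective_eq_comp_traceForm :
    (fun W => f₀ ((M₁ * toM W).trace, (M₂ * toM W).trace) + ρ * (toM W).trace) =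
      fun W => f₀ ((traceForm M₁).prod (traceForm M₂) W) + ρ * traceForm 1 W := by
  ext W
  simp

lemma convexOn_objective (hf₀ : ConvexOn ℝ univ f₀) :
    ConvexOn ℝ univ
      (fun W => f₀ ((M₁ * toM W).trace, (M₂ * toM W).trace) + ρ * (toM W).trace) := by
  rw [objective_eq_comp_traceForm]
  exact (hf₀.comp_linearMap ((traceForm M₁).prod (traceForm M₂)).toLinearMap).add
    ((ρ • traceForm 1).toLinearMap.convexOn convex_univ)

lemma differentiable_objective (hf₀ : Differentiable ℝ f₀) :
    Differentiable ℝ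
      (fun W => f₀ ((M₁ * toM W).trace, (M₂ * toM W).trace) + ρ * (toM W).trace) := by
  rw [objective_eq_comp_traceForm]
  exact (hf₀.comp ((traceForm M₁).prod (traceForm M₂)).differentiable).add
    ((traceForm 1).differentiable.const_mul ρ)

end Objective

theorem stmt16_general (Imax : ℝ)
    (M₁ M₂ : Matrix (Fin 3) (Fin 3) ℝ)
    (f₀ : ℝ × ℝ → ℝ) (hf₀conv : ConvexOn ℝ Set.univ f₀) (hf₀diff : Differentiable ℝ f₀)
    (ρ : ℝ) (hρ : 0 < ρ)
    (f : FrobSpace → ℝ)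
    (hf : f = fun W => f₀ ((M₁ * toM W).trace, (M₂ * toM W).trace) + ρ * (toM W).trace)
    (L : NNReal)
    (hlip : LipschitzWith L (fun W => gradient f W))
    (α : ℝ) (hα₀ : 0 < α) (hαL : α ≤ 1 / (L : ℝ))
    (Wk : FrobSpace) (hWk : Wk ∈ WsetE Imax)
    (WPGD : FrobSpace) (hWPGD : WPGD ∈ WsetE Imax)
    (hproj : ∀ W ∈ WsetE Imax,
      ‖WPGD - (Wk - α • gradient f Wk)‖ ≤ ‖W - (Wk - α • gradient f Wk)‖)
    (Wnext : FrobSpace)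
    (hWnext : Wnext ∈ WsetE Imax ∧ (toM Wnext).rank ≤ 1 ∧
      (M₁ * toM Wnext).trace = (M₁ * toM WPGD).trace ∧
      (M₂ * toM Wnext).trace = (M₂ * toM WPGD).trace)
    (hWnextMin : ∀ W ∈ WsetE Imax,
      (M₁ * toM W).trace = (M₁ * toM WPGD).trace →
      (M₂ * toM W).trace = (M₂ * toM WPGD).trace →
      (toM Wnext).trace ≤ (toM W).trace) :
    f Wnext ≤ f WPGD ∧ f WPGD ≤ f Wk ∧
      (f Wnext = f Wk → ∀ W ∈ WsetE Imax, f Wk ≤ f W) := by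
  obtain ⟨-, -, htr₁, htr₂⟩ := hWnext
  have hdiff : Differentiable ℝ f := hf ▸ differentiable_objective M₁ M₂ ρ hf₀diff
  have hconv : ConvexOn ℝ (WsetE Imax) f :=
    (hf ▸ convexOn_objective M₁ M₂ ρ hf₀conv).subset (subset_univ _) (convex_WsetE Imax)
  have hαL' : α * L ≤ 1 :=
    calc α * L ≤ 1 / L * L := mul_le_mul_of_nonneg_right hαL L.coe_nonneg
      _ ≤ 1 := by rw [one_div_mul_eq_div]; exact div_self_le_one _
  have hdecrease := sufficient_decrease_of_projected_gradient_step (convex_WsetE Imax) hdiff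
    hlip hα₀.le hαL' hWk hWPGD (isMinOn_iff.2 hproj)
  have hnext : f Wnext ≤ f WPGD := by
    rw [hf]
    dsimp only
    rw [htr₁, htr₂]
    gcongr
    exact hWnextMin WPGD hWPGD rfl rfl
  refine ⟨hnext, ?_, fun hstall W hW => ?_⟩
  · nlinarith [sq_nonneg ‖WPGD - Wk‖]
  · have hfixed : WPGD = Wk := by
      rw [← sub_eq_zero, ← norm_eq_zero]
      nlinarith [norm_nonneg (WPGD - Wk)]
    subst hfixed
    exact isMinOn_iff.1 (isMinOn_of_projected_gradient_step_eq_self (convex_WsetE Imax) hconv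
      (hdiff _) hα₀ hWk (isMinOn_iff.2 hproj)) W hW

/-- one-step descent form of Theorem 2: each iteration of the modified
projected gradient descent controller — a projected gradient step followed by a rank-1
trace-minimal adjustment preserving the outputs `Tr(M₁·), Tr(M₂·)` — does not increase
the objective `f(W) = f₀(Tr(M₁W), Tr(M₂W)) + ρ·Tr(W)`, and the objective stalls only at
a global minimizer of `f` over `𝒲`. -/
theorem stmt16 (E : EuclideanSpace ℝ (Fin 2)) (hE : E ≠ 0) (R X : ℝ)
    (hR : R ≠ 0) (hX : X ≠ 0) (Imax : ℝ) (hI : 0 < Imax)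
    (M₁ M₂ : Matrix (Fin 3) (Fin 3) ℝ)
    (hM₁ : M₁ ∈ ({MP E R, MQ E X, MV E R X} : Set (Matrix (Fin 3) (Fin 3) ℝ)))
    (hM₂ : M₂ ∈ ({MP E R, MQ E X, MV E R X} : Set (Matrix (Fin 3) (Fin 3) ℝ)))
    (hMne : M₁ ≠ M₂)
    (f₀ : ℝ × ℝ → ℝ) (hf₀conv : ConvexOn ℝ Set.univ f₀) (hf₀diff : Differentiable ℝ f₀)
    (ρ : ℝ) (hρ : 0 < ρ)
    (f : FrobSpace → ℝ)
    (hf : f = fun W => f₀ ((M₁ * toM W).trace, (M₂ * toM W).trace) + ρ * (toM W).trace)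
    (L : NNReal) (hL : 0 < L)
    (hlip : LipschitzWith L (fun W => gradient f W))
    (α : ℝ) (hα₀ : 0 < α) (hαL : α ≤ 1 / (L : ℝ))
    (Wk : FrobSpace) (hWk : Wk ∈ WsetE Imax)
    (WPGD : FrobSpace) (hWPGD : WPGD ∈ WsetE Imax)
    (hproj : ∀ W ∈ WsetE Imax,
      ‖WPGD - (Wk - α • gradient f Wk)‖ ≤ ‖W - (Wk - α • gradient f Wk)‖)
    (Wnext : FrobSpace)
    (hWnext : Wnext ∈ WsetE Imax ∧ (toM Wnext).rank ≤ 1 ∧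
      (M₁ * toM Wnext).trace = (M₁ * toM WPGD).trace ∧
      (M₂ * toM Wnext).trace = (M₂ * toM WPGD).trace)
    (hWnextMin : ∀ W ∈ WsetE Imax,
      (M₁ * toM W).trace = (M₁ * toM WPGD).trace →
      (M₂ * toM W).trace = (M₂ * toM WPGD).trace →
      (toM Wnext).trace ≤ (toM W).trace) :
    f Wnext ≤ f WPGD ∧ f WPGD ≤ f Wk ∧
      (f Wnext = f Wk → ∀ W ∈ WsetE Imax, f Wk ≤ f W) :=
  stmt16_general Imax M₁ M₂ f₀ hf₀conv hf₀diff ρ hρ f hf L hlip α hα₀ hαL Wk hWk WPGD hWPGD hproj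
    Wnext hWnext hWnextMin
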